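/- (General derivative formula) For all m ≥ 1 and n ≥ m, the m-th derivative of the Chebyshev polynomial satisfies T_n^{(m)}(x) = Σ_l [ (n / c_l) · (1/((m−1)! · 2^{m−2})) · Π_{i} (n² − (l+i)²) ] T_l(x), where l ranges over 0 ≤ l ≤ n − m with n + l + m even, and the product runs over i ∈ {2−m, 4−m, …, m−4, m−2} (step 2; empty product taken as 1 when m = 1, with the convention that 1/((m−1)! 2^{m−2}) = 2 when m = 1); here c_0 = 2 and c_l = 1 for l ≥ 1. -/

import Mathlib

open Polynomial Polynomial.Chebyshev

noncomputable def c : ℕ → ℝ := fun l => if l = 0 then 2 else 1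

/-!
Since `T_l' = l U_{l-1}` and `U_{l-1}` is the sum of `(2 / c_k) T_k` over `k < l` of opposite
parity to `l`, the formula follows by induction on `m`. In the inductive step the coefficient of
`T_k` is a sum over `l = k + 1, k + 3, …, n - m` of `l · P_m(l)`, where `P_m(x)` is the product
of `n² - (x + i)²` over `i = 1 - m, 3 - m, …, m - 1`. This sum telescopes, because
`P_{m+1}(x - 1) - P_{m+1}(x + 1) = 4 (m + 1) x P_m(x)` and `P_{m+1}(n - m) = 0`.
-/

open Finset
open scoped Nat

noncomputable def sqDiffProd (n m : ℕ) (x : ℝ) : ℝ :=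
  ∏ j ∈ range m, ((n : ℝ) ^ 2 - (x - m + 1 + 2 * j) ^ 2)

lemma sqDiffProd_succ_add_one (n m : ℕ) (x : ℝ) :
    sqDiffProd n (m + 1) (x + 1) = sqDiffProd n m x * ((n : ℝ) ^ 2 - (x + 1 + m) ^ 2) := by
  rw [sqDiffProd, sqDiffProd, prod_range_succ]
  push_cast
  ring_nf

lemma sqDiffProd_succ_sub_one (n m : ℕ) (x : ℝ) :
    sqDiffProd n (m + 1) (x - 1) = sqDiffProd n m x * ((n : ℝ) ^ 2 - (x - 1 - m) ^ 2) := by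
  rw [sqDiffProd, sqDiffProd, prod_range_succ', mul_comm]
  push_cast
  ring_nf

lemma sqDiffProd_succ_sub_one_sub_succ_add_one (n m : ℕ) (x : ℝ) :
    sqDiffProd n (m + 1) (x - 1) - sqDiffProd n (m + 1) (x + 1) =
      4 * (m + 1) * x * sqDiffProd n m x := by
  rw [sqDiffProd_succ_add_one, sqDiffProd_succ_sub_one]
  ring

lemma sqDiffProd_succ_sub_eq_zero (n m : ℕ) : sqDiffProd n (m + 1) ((n : ℝ) - m) = 0 :=
  prod_eq_zero (mem_range.2 (lt_add_one m)) (by push_cast; ring)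

lemma four_mul_sum_mul_sqDiffProd (n m k t : ℕ) (h : (k : ℝ) + 2 * t = n - m) :
    4 * (m + 1) * ∑ j ∈ range t, ((k : ℝ) + 1 + 2 * j) * sqDiffProd n m (k + 1 + 2 * j) =
      sqDiffProd n (m + 1) k := by
  have step (j : ℕ) : 4 * (m + 1) * (((k : ℝ) + 1 + 2 * j) * sqDiffProd n m (k + 1 + 2 * j)) =
      sqDiffProd n (m + 1) (k + 2 * j) - sqDiffProd n (m + 1) (k + 2 * (j + 1 : ℕ)) := by
    have := sqDiffProd_succ_sub_one_sub_succ_add_one n m (k + 1 + 2 * j)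
    push_cast
    rw [show (k : ℝ) + 1 + 2 * j - 1 = k + 2 * j by ring,
      show (k : ℝ) + 1 + 2 * j + 1 = k + 2 * (j + 1) by ring] at this
    linarith
  rw [mul_sum, sum_congr rfl fun j _ => step j,
    sum_range_sub' (fun j : ℕ => sqDiffProd n (m + 1) (k + 2 * j)), h,
    sqDiffProd_succ_sub_eq_zero]
  simp

namespace Polynomial.Chebyshev

theorem U_eq_sum_T : ∀ n : ℕ, U ℝ n =
    ∑ l ∈ (range (n + 1)).filter (fun l => Even (n + l)), Polynomial.C (2 / c l) * T ℝ l
  | 0 => by simp [sum_filter, c]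
  | 1 => by simp [sum_filter, sum_range_succ, c, map_ofNat]
  | n + 2 => by
    have parity (l : ℕ) : Even (n + 2 + l) ↔ Even (n + l) := by
      simp only [Nat.even_iff]
      omega
    have hU : U ℝ (n + 2 : ℕ) = 2 * T ℝ (n + 2 : ℕ) + U ℝ n := by
      exact_mod_cast U_eq_two_mul_T_add_U ℝ n
    conv_rhs => rw [sum_filter, sum_range_succ, sum_range_succ]
    rw [if_neg (by simp only [Nat.even_iff]; omega), if_pos (by simp only [Nat.even_iff]; omega),
      show c (n + 2) = 1 by simp [c], hU, U_eq_sum_T n, sum_filter]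
    simp only [parity]
    simp [add_comm, map_ofNat]

theorem derivative_T_eq_sum (l : ℕ) : derivative (T ℝ l) =
    ∑ k ∈ (range l).filter (fun k => Even (l + k + 1)),
      Polynomial.C (2 * l / c k) * T ℝ k := by
  cases l with
  | zero => simp
  | succ l =>
    rw [T_derivative_eq_U, show ((l + 1 : ℕ) : ℤ) - 1 = l by push_cast; ring, U_eq_sum_T,
      mul_sum]
    refine sum_congr (by congr 1; ext k; simp [add_right_comm l 1 k, Nat.even_add_one])
      fun k _ => ?_
    rw [← mul_assoc, mul_comm 2, mul_div_assoc, Polynomial.C_mul]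
    simp

end Polynomial.Chebyshev

/-- The coefficient of `T_l` in `T_n^{(m+1)}`. -/
noncomputable def derivCoeff (n m l : ℕ) : ℝ :=
  n / c l * (2 / (m ! * 2 ^ m)) * sqDiffProd n m l

lemma sum_derivCoeff_mul (n m k t : ℕ) (h : (k : ℝ) + 2 * t = n - m) :
    ∑ j ∈ range t, derivCoeff n m (k + 1 + 2 * j) * (2 * (k + 1 + 2 * j : ℕ) / c k) =
      derivCoeff n (m + 1) k := by
  have hc (j : ℕ) : c (k + 1 + 2 * j) = 1 := by simp [c]
  have hck : c k ≠ 0 := by unfold c; split <;> norm_num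
  rw [derivCoeff, ← four_mul_sum_mul_sqDiffProd n m k t h, Nat.factorial_succ]
  simp only [derivCoeff, hc, mul_sum]
  refine sum_congr rfl fun j _ => ?_
  push_cast
  field_simp
  ring

theorem iterate_derivative_T_succ (n m : ℕ) :
    derivative^[m + 1] (T ℝ n) =
      ∑ l ∈ (range (n - m)).filter (fun l => Even (n + l + m + 1)),
        Polynomial.C (derivCoeff n m l) * T ℝ l := by
  induction m with
  | zero =>
    rw [Function.iterate_one, derivative_T_eq_sum]
    refine sum_congr (by simp) fun l _ => ?_
    simp [derivCoeff, sqDiffProd, div_mul_eq_mul_div, mul_comm]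
  | succ m ih =>
    have swap : ∀ l k, (l ∈ (range (n - m)).filter (fun l => Even (n + l + m + 1)) ∧
          k ∈ (range l).filter (fun k => Even (l + k + 1))) ↔
        (l ∈ (range ((n - m - k) / 2)).image (fun j => k + 1 + 2 * j) ∧
          k ∈ (range (n - (m + 1))).filter (fun k => Even (n + k + (m + 1) + 1))) := by
      intro l k
      simp only [mem_filter, mem_range, mem_image, Nat.even_iff]
      constructor
      · rintro ⟨⟨hl, hnl⟩, hk, hlk⟩
        exact ⟨⟨(l - k - 1) / 2, by omega, by omega⟩, by omega, by omega⟩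
      · rintro ⟨⟨j, hj, rfl⟩, hk, hnk⟩
        omega
    rw [Function.iterate_succ_apply', ih, derivative_sum]
    simp_rw [derivative_C_mul, derivative_T_eq_sum, mul_sum, ← mul_assoc, ← Polynomial.C_mul]
    rw [sum_comm' swap]
    refine sum_congr rfl fun k hk => ?_
    rw [sum_image (by intro _ _ _ _ h; simp only at h; omega), ← sum_mul, ← map_sum,
      sum_derivCoeff_mul n m k _ ?_]
    simp only [mem_filter, mem_range, Nat.even_iff] at hk
    have hkt : ((k + 2 * ((n - m - k) / 2) : ℕ) : ℝ) = (n - m : ℕ) := by congr 1; omega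
    push_cast [Nat.cast_sub (show m ≤ n by omega)] at hkt
    exact hkt

theorem chebyshev_deriv_general (m n : ℕ) (hm : 1 ≤ m) (hnm : m ≤ n) :
    Polynomial.derivative^[m] (T ℝ n) =
      ∑ l ∈ (Finset.range (n - m + 1)).filter (fun l => Even (n + l + m)),
        Polynomial.C (((n : ℝ) / c l) * (2 / ((Nat.factorial (m - 1) : ℝ) * 2 ^ (m - 1)))
          * ∏ j ∈ Finset.range (m - 1),
              ((n : ℝ) ^ 2 - ((l : ℝ) + ((2 : ℝ) - (m : ℝ) + 2 * (j : ℝ))) ^ 2)) * T ℝ l := by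
  obtain ⟨m, rfl⟩ := Nat.exists_eq_add_of_le' hm
  rw [iterate_derivative_T_succ, show n - (m + 1) + 1 = n - m by omega, Nat.add_sub_cancel]
  refine sum_congr (by simp only [add_assoc]) fun l _ => ?_
  rw [derivCoeff, sqDiffProd]
  congr 3
  refine prod_congr rfl fun j _ => ?_
  push_cast
  ring
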